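/- If n = pq is a product of two (not necessarily distinct) primes p and q, then n+1 does not divide σ(n). -/

import Mathlib

/-- Sum of positive divisors. -/
def sigma (n : ℕ) : ℕ := ∑ d ∈ n.divisors, d

/-- σ⁺(n) = ∏_{p ∣ n} (σ(p^{v_p(n)}) + 1). -/
def sigmaPlus (n : ℕ) : ℕ := ∏ p ∈ n.primeFactors, (sigma (p ^ n.factorization p) + 1)

/-- φ⁺(n) = ∏_{p ∣ n} (φ(p^{v_p(n)}) + 1). -/
def phiPlus (n : ℕ) : ℕ := ∏ p ∈ n.primeFactors, (Nat.totient (p ^ n.factorization p) + 1)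

/-! σ(pq) exceeds pq + 1 by p + q when p ≠ q, and σ(p²) = p² + p + 1 exceeds p² + 1 by p.
In both cases the excess is strictly between 0 and n + 1, so n + 1 cannot divide σ(n). -/

lemma sigma_eq_arithmeticFunction_sigma_one (n : ℕ) : sigma n = ArithmeticFunction.sigma 1 n :=
  (ArithmeticFunction.sigma_one_apply n).symm

lemma sigma_prime_pow {p : ℕ} (hp : p.Prime) (i : ℕ) :
    sigma (p ^ i) = ∑ k ∈ Finset.range (i + 1), p ^ k := by
  rw [sigma_eq_arithmeticFunction_sigma_one, ArithmeticFunction.sigma_one_apply_prime_pow hp]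

lemma sigma_mul_of_coprime {m n : ℕ} (h : m.Coprime n) : sigma (m * n) = sigma m * sigma n := by
  simp only [sigma_eq_arithmeticFunction_sigma_one,
    ArithmeticFunction.isMultiplicative_sigma.map_mul_of_coprime h]

lemma sigma_prime {p : ℕ} (hp : p.Prime) : sigma p = p + 1 := by
  simpa [Finset.sum_range_succ, add_comm] using sigma_prime_pow hp 1

lemma sigma_prime_mul_self {p : ℕ} (hp : p.Prime) : sigma (p * p) = p * p + 1 + p := by
  rw [← sq, sigma_prime_pow hp]
  simp only [Finset.sum_range_succ, Finset.sum_range_zero]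
  ring

lemma sigma_prime_mul_prime {p q : ℕ} (hp : p.Prime) (hq : q.Prime) (hne : p ≠ q) :
    sigma (p * q) = p * q + 1 + (p + q) := by
  rw [sigma_mul_of_coprime ((Nat.coprime_primes hp hq).mpr hne), sigma_prime hp, sigma_prime hq]
  ring

theorem stmt_2 (p q n : ℕ) (hp : p.Prime) (hq : q.Prime) (hn : n = p * q) :
    ¬ (n + 1) ∣ sigma n := by
  subst hn
  have hp2 := hp.two_le
  have hq2 := hq.two_le
  obtain ⟨r, hr_pos, hr_lt, hσ⟩ : ∃ r, 0 < r ∧ r < p * q + 1 ∧ sigma (p * q) = p * q + 1 + r := by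
    rcases eq_or_ne p q with rfl | hne
    · exact ⟨p, hp.pos, by nlinarith, sigma_prime_mul_self hp⟩
    · exact ⟨p + q, by omega, by nlinarith, sigma_prime_mul_prime hp hq hne⟩
  rw [hσ, Nat.dvd_add_right dvd_rfl]
  exact Nat.not_dvd_of_pos_of_lt hr_pos hr_lt
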